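/- arXiv:2305.15532 — 2 statements merged into one kernel-verified Lean document; each statement's English description precedes it below -/
import Mathlib

section
/- Let α, β ∈ ℝ, 0 ≤ d < 1 with (2α − |β|)(1 − d) > |β|, β ≠ 0, and L > 0. Define Ψ(μ₁, μ₂) = [[−2α + |β| + μ₁L(1 + α²) + μ₂|β|, β(1 − Lμ₁α)], [β(1 − Lμ₁α), |β|(d − 1) + Lμ₁β²]]. If 0 < μ₁ < ((2α − |β|)(1 − d) − |β|)/(L(1 − d)(1 + α²)) and μ₂ = ((2α − |β|)(1 − d) − |β| − L(1 − d)(1 + α²)μ₁)/(|β|(1 − d)), then the (1,1) entry of Ψ(μ₁, μ₂) is negative and det Ψ(μ₁, μ₂) > 0; hence Ψ(μ₁, μ₂) is negative definite. -/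
/-!
The choice of `μ₂` collapses the `(1,1)` entry of `Ψ` to `-|β| / (1 - d) < 0`, after which
`det Ψ = β² L μ₁ (2α - |β| / (1 - d) - L μ₁ α²)`. The upper bound on `μ₁` says exactly that
`L μ₁ (1 + α²) < 2α - |β| - |β| / (1 - d)`, so the last factor exceeds `L μ₁ + |β| > 0`.
Negative definiteness then follows from Sylvester's criterion for `2 × 2` forms.
-/

theorem binaryQuadForm_neg_of_neg_of_det_pos {a b c : ℝ} (ha : a < 0) (hdet : 0 < a * c - b ^ 2)
    {x y : ℝ} (hxy : (x, y) ≠ ((0 : ℝ), (0 : ℝ))) :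
    a * x ^ 2 + 2 * b * x * y + c * y ^ 2 < 0 := by
  have hsum : 0 < (a * x + b * y) ^ 2 + (a * c - b ^ 2) * y ^ 2 := by
    rcases eq_or_ne y 0 with rfl | hy
    · have hx : x ≠ 0 := by rintro rfl; exact hxy rfl
      rw [mul_zero, add_zero, zero_pow two_ne_zero, mul_zero, add_zero]
      exact sq_pos_of_ne_zero (mul_ne_zero ha.ne hx)
    · exact add_pos_of_nonneg_of_pos (sq_nonneg _) (mul_pos hdet (sq_pos_of_ne_zero hy))
  refine neg_of_mul_pos_right (a := a) ?_ ha.le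
  linear_combination hsum

section Psi

variable {α β d L μ₁ : ℝ}

theorem psi₁₁_eq_of_μ₂ (hβ : β ≠ 0) (hd : d ≠ 1) {μ₂ : ℝ}
    (hμ₂ : μ₂ = ((2*α - |β|) * (1 - d) - |β| - L * (1 - d) * (1 + α^2) * μ₁)
              / (|β| * (1 - d))) :
    -2*α + |β| + μ₁ * L * (1 + α^2) + μ₂ * |β| = -|β| / (1 - d) := by
  have : 1 - d ≠ 0 := sub_ne_zero.mpr hd.symm
  have : |β| ≠ 0 := abs_ne_zero.mpr hβ
  subst hμ₂
  field_simp
  ring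

theorem psi_det_eq (hd : d ≠ 1) :
    -|β| / (1 - d) * (|β| * (d - 1) + L * μ₁ * β^2) - (β * (1 - L * μ₁ * α))^2
      = β^2 * (L * μ₁) * (2*α - |β| / (1 - d) - L * μ₁ * α^2) := by
  have : 1 - d ≠ 0 := sub_ne_zero.mpr hd.symm
  field_simp
  rw [← sq_abs β]
  ring

theorem L_mul_μ₁_mul_lt_of_μ₁_lt (hd : d < 1) (hL : 0 < L)
    (hμ₁ : μ₁ < ((2*α - |β|) * (1 - d) - |β|) / (L * (1 - d) * (1 + α^2))) :
    L * μ₁ * (1 + α^2) < 2*α - |β| - |β| / (1 - d) := by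
  have he : 0 < 1 - d := sub_pos.mpr hd
  rw [lt_div_iff₀ (by positivity)] at hμ₁
  rw [lt_sub_iff_add_lt, ← lt_sub_iff_add_lt', div_lt_iff₀ he]
  linarith

end Psi

theorem stmt_10_general (α β d L μ₁ μ₂ : ℝ) (hβ : β ≠ 0) (hd1 : d < 1)
    (hL : 0 < L)
    (hμ₁0 : 0 < μ₁)
    (hμ₁ : μ₁ < ((2*α - |β|) * (1 - d) - |β|) / (L * (1 - d) * (1 + α^2)))
    (hμ₂ : μ₂ = ((2*α - |β|) * (1 - d) - |β| - L * (1 - d) * (1 + α^2) * μ₁)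
              / (|β| * (1 - d))) :
    (-2*α + |β| + μ₁ * L * (1 + α^2) + μ₂ * |β| < 0) ∧
    ((-2*α + |β| + μ₁ * L * (1 + α^2) + μ₂ * |β|) * (|β| * (d - 1) + L * μ₁ * β^2)
      - (β * (1 - L * μ₁ * α))^2 > 0) ∧
    (∀ x y : ℝ, (x, y) ≠ ((0:ℝ), (0:ℝ)) →
      (-2*α + |β| + μ₁ * L * (1 + α^2) + μ₂ * |β|) * x^2
        + 2 * (β * (1 - L * μ₁ * α)) * x * y
        + (|β| * (d - 1) + L * μ₁ * β^2) * y^2 < 0) := by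
  have hΨ₁₁ := psi₁₁_eq_of_μ₂ hβ hd1.ne hμ₂
  have hΨ₁₁_neg : -2*α + |β| + μ₁ * L * (1 + α^2) + μ₂ * |β| < 0 := by
    rw [hΨ₁₁, neg_div]
    exact neg_neg_of_pos (div_pos (abs_pos.mpr hβ) (sub_pos.mpr hd1))
  have hLμ₁ : 0 < L * μ₁ := mul_pos hL hμ₁0
  have hfactor : 0 < 2*α - |β| / (1 - d) - L * μ₁ * α^2 := by
    linarith [L_mul_μ₁_mul_lt_of_μ₁_lt hd1 hL hμ₁, abs_nonneg β]
  have hdet : (-2*α + |β| + μ₁ * L * (1 + α^2) + μ₂ * |β|) * (|β| * (d - 1) + L * μ₁ * β^2)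
      - (β * (1 - L * μ₁ * α))^2 > 0 := by
    rw [hΨ₁₁, psi_det_eq hd1.ne]
    exact mul_pos (mul_pos (sq_pos_of_ne_zero hβ) hLμ₁) hfactor
  exact ⟨hΨ₁₁_neg, hdet, fun x y hxy => binaryQuadForm_neg_of_neg_of_det_pos hΨ₁₁_neg hdet hxy⟩

theorem stmt_10 (α β d L μ₁ μ₂ : ℝ) (hβ : β ≠ 0) (hd0 : 0 ≤ d) (hd1 : d < 1)
    (hcond : (2*α - |β|) * (1 - d) > |β|) (hL : 0 < L)
    (hμ₁0 : 0 < μ₁)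
    (hμ₁ : μ₁ < ((2*α - |β|) * (1 - d) - |β|) / (L * (1 - d) * (1 + α^2)))
    (hμ₂ : μ₂ = ((2*α - |β|) * (1 - d) - |β| - L * (1 - d) * (1 + α^2) * μ₁)
              / (|β| * (1 - d))) :
    (-2*α + |β| + μ₁ * L * (1 + α^2) + μ₂ * |β| < 0) ∧
    ((-2*α + |β| + μ₁ * L * (1 + α^2) + μ₂ * |β|) * (|β| * (d - 1) + L * μ₁ * β^2)
      - (β * (1 - L * μ₁ * α))^2 > 0) ∧
    (∀ x y : ℝ, (x, y) ≠ ((0:ℝ), (0:ℝ)) →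
      (-2*α + |β| + μ₁ * L * (1 + α^2) + μ₂ * |β|) * x^2
        + 2 * (β * (1 - L * μ₁ * α)) * x * y
        + (|β| * (d - 1) + L * μ₁ * β^2) * y^2 < 0) :=
  stmt_10_general α β d L μ₁ μ₂ hβ hd1 hL hμ₁0 hμ₁ hμ₂
end

section
/- Let α, β ∈ ℝ with β ≠ 0 and 0 ≤ d < 1 satisfy (2α − |β|)(1 − d) > |β|, let 0 < L < √3π and M > 0. Then there exist μ₁, μ₂ > 0 with μ₁L < 1 and λ > 0 such that λ ≤ min{ μ₁(3π² − L²)/(L²(1 + μ₁)), μ₂(1 − d)/(M(1 + μ₂)) } and the matrix Ψ(μ₁, μ₂) = Φ + Lμ₁·[[α²+1, −αβ],[−αβ, β²]] + |β|μ₂·[[1,0],[0,0]] is negative semidefinite, where Φ = [[−2α+|β|, β],[β, |β|(d−1)]]. -/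
theorem quad_neg_aux (A B C x y : ℝ) (hA : A < 0) (hdet : 0 ≤ A * C - B ^ 2) :
    A * x ^ 2 + 2 * B * x * y + C * y ^ 2 ≤ 0 := by
  nlinarith [sq_nonneg (A * x + B * y), mul_nonneg hdet (sq_nonneg y), hA]

set_option maxHeartbeats 2000000 in
theorem stmt_19 (α β d L M : ℝ) (hβ : β ≠ 0) (hd0 : 0 ≤ d) (hd1 : d < 1)
    (hcond : (2*α - |β|) * (1 - d) > |β|) (hL0 : 0 < L)
    (hL : L < Real.sqrt 3 * Real.pi) (hM : 0 < M) :
    ∃ μ₁ μ₂ lam : ℝ, 0 < μ₁ ∧ 0 < μ₂ ∧ μ₁ * L < 1 ∧ 0 < lam ∧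
      lam ≤ min (μ₁ * (3 * Real.pi ^ 2 - L ^ 2) / (L ^ 2 * (1 + μ₁)))
                (μ₂ * (1 - d) / (M * (1 + μ₂))) ∧
      ∀ x y : ℝ,
        (-2*α + |β| + L * μ₁ * (α^2 + 1) + |β| * μ₂) * x^2
          + 2 * (β + L * μ₁ * (-(α * β))) * x * y
          + (|β| * (d - 1) + L * μ₁ * β^2) * y^2 ≤ 0 := by
  have hb : 0 < |β| := abs_pos.mpr hβ
  set b := |β| with hbdef
  have hb2 : β ^ 2 = b ^ 2 := (sq_abs β).symm
  have he : 0 < 1 - d := by linarith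
  have ha : 0 < 2 * α - b := by nlinarith
  set a := 2 * α - b with hadef
  have hε : 0 < b * (a * (1 - d) - b) := by nlinarith
  set ε := b * (a * (1 - d) - b) with hεdef
  set K := 2 * b ^ 3 + b * (1 - d) * (α ^ 2 + 1) + b ^ 2 + 1 with hKdef
  have hK : 0 < K := by positivity
  clear_value b a ε K
  set μ₂ := min (min 1 (ε / (2 * b ^ 2 * (1 - d) + 1))) (a / (2 * b + 1)) with hμ₂def
  have hden1 : 0 < 2 * b ^ 2 * (1 - d) + 1 := by nlinarith [sq_nonneg b]
  have hden2 : 0 < 2 * b + 1 := by linarith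
  have hμ₂pos : 0 < μ₂ :=
    lt_min (lt_min one_pos (div_pos hε hden1)) (div_pos ha hden2)
  have hμ₂1 : μ₂ ≤ 1 := le_trans (min_le_left _ _) (min_le_left _ _)
  have hμ₂ε : b ^ 2 * (1 - d) * μ₂ ≤ ε / 2 := by
    have h1 : μ₂ ≤ ε / (2 * b ^ 2 * (1 - d) + 1) :=
      le_trans (min_le_left _ _) (min_le_right _ _)
    rw [le_div_iff₀ hden1] at h1
    nlinarith [sq_nonneg b, mul_nonneg (mul_nonneg (sq_nonneg b) he.le) hμ₂pos.le]
  have hμ₂a : b * μ₂ ≤ a / 2 := by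
    have h1 : μ₂ ≤ a / (2 * b + 1) := min_le_right _ _
    rw [le_div_iff₀ hden2] at h1
    nlinarith
  clear_value μ₂
  set s := min (min (ε / (2 * K)) (1 / 2)) (a / (4 * (α ^ 2 + 1))) with hsdef
  have hs0 : 0 < s :=
    lt_min (lt_min (div_pos hε (by linarith)) (by norm_num))
      (div_pos ha (by positivity))
  have hs1 : s ≤ 1 / 2 := le_trans (min_le_left _ _) (min_le_right _ _)
  have hsK : s * K ≤ ε / 2 := by
    have h1 : s ≤ ε / (2 * K) := le_trans (min_le_left _ _) (min_le_left _ _)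
    rw [le_div_iff₀ (by linarith)] at h1
    nlinarith
  have hsa : s * (α ^ 2 + 1) ≤ a / 4 := by
    have h1 : s ≤ a / (4 * (α ^ 2 + 1)) := min_le_right _ _
    rw [le_div_iff₀ (by positivity)] at h1
    nlinarith
  clear_value s
  have hL2 : L ^ 2 < 3 * Real.pi ^ 2 := by
    have h3 : Real.sqrt 3 ^ 2 = 3 := Real.sq_sqrt (by norm_num)
    have h4 : L * L < (Real.sqrt 3 * Real.pi) * (Real.sqrt 3 * Real.pi) :=
      mul_self_lt_mul_self hL0.le hL
    calc L ^ 2 = L * L := sq L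
      _ < (Real.sqrt 3 * Real.pi) * (Real.sqrt 3 * Real.pi) := h4
      _ = Real.sqrt 3 ^ 2 * Real.pi ^ 2 := by ring
      _ = 3 * Real.pi ^ 2 := by rw [h3]
  have hsL : 0 < s / L := div_pos hs0 hL0
  refine ⟨s / L, μ₂,
    min ((s / L) * (3 * Real.pi ^ 2 - L ^ 2) / (L ^ 2 * (1 + s / L)))
        (μ₂ * (1 - d) / (M * (1 + μ₂))),
    hsL, hμ₂pos, ?_, ?_, le_refl _, ?_⟩
  · have : s / L * L = s := div_mul_cancel₀ s hL0.ne'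
    rw [this]; linarith
  · exact lt_min
      (div_pos (mul_pos hsL (by linarith)) (mul_pos (pow_pos hL0 2) (by linarith)))
      (div_pos (mul_pos hμ₂pos he) (mul_pos hM (by linarith)))
  · intro x y
    have hLs : L * (s / L) = s := by field_simp
    rw [hLs]
    have hA : (-2 * α + b + s * (α ^ 2 + 1) + b * μ₂) < 0 := by linarith [hsa, hμ₂a, ha, hadef]
    have hdet : 0 ≤ (-2 * α + b + s * (α ^ 2 + 1) + b * μ₂)
        * (b * (d - 1) + s * β ^ 2) - (β + s * (-(α * β))) ^ 2 := by
      have key : (-2 * α + b + s * (α ^ 2 + 1) + b * μ₂)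
          * (b * (d - 1) + s * β ^ 2) - (β + s * (-(α * β))) ^ 2 =
          ε + (s * (b ^ 3 * (1 + μ₂) - b * (1 - d) * (α ^ 2 + 1)) + s ^ 2 * b ^ 2)
            - b ^ 2 * (1 - d) * μ₂ := by
        rw [hεdef, hadef]
        linear_combination (-1 + s * b + s ^ 2 + s * b * μ₂) * hb2
      have hbound : -(s * K) ≤ s * (b ^ 3 * (1 + μ₂) - b * (1 - d) * (α ^ 2 + 1))
          + s ^ 2 * b ^ 2 := by
        have h1 : 0 ≤ s * (b ^ 3 * (1 + μ₂)) :=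
          mul_nonneg hs0.le (by nlinarith [pow_pos hb 3])
        have h2 : 0 ≤ s ^ 2 * b ^ 2 := mul_nonneg (sq_nonneg s) (sq_nonneg b)
        have h3 : s * (b * (1 - d) * (α ^ 2 + 1)) ≤ s * K := by
          apply mul_le_mul_of_nonneg_left _ hs0.le
          nlinarith [sq_nonneg b, pow_pos hb 3]
        nlinarith
      linarith [key.ge, hbound, hsK, hμ₂ε]
    exact quad_neg_aux _ _ _ x y hA hdet
end
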